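/- arXiv:1704.00108 — 4 statements merged into one kernel-verified Lean document; each statement's English description precedes it below -/
import Mathlib

section
/- For all positive utility vectors v, v' ∈ ℝ^N, all weight vectors b ∈ [0,1]^N, and every subset S ⊆ {1,…,N}: Σ_{i∈S} b(i)·(φ(i,S|v) − φ(i,S|v')) ≤ Σ_{i∈S} |log(v(i)/v'(i))|, where φ(i,S|v) = v(i)/(1 + Σ_{ℓ∈S} v(ℓ)). -/
private lemma ratio_log_bound (v w D : ℝ) (hw : 0 < w) (hle : w ≤ v) (hD : 1 + v ≤ D) :
    (v - w) / D ≤ Real.log (v / w) := by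
  have hv : 0 < v := lt_of_lt_of_le hw hle
  have hD0 : 0 < D := lt_of_lt_of_le (by linarith) hD
  have h1 : (v - w) / D ≤ (v - w) / v :=
    div_le_div_of_nonneg_left (by linarith) hv (by linarith)
  have h2 : Real.log (w / v) ≤ w / v - 1 := Real.log_le_sub_one_of_pos (by positivity)
  have h3 : Real.log (v / w) = - Real.log (w / v) := by
    rw [← Real.log_inv]; congr 1; field_simp
  have h4 : (v - w) / v = 1 - w / v := by field_simp
  nlinarith [h1, h2]

private lemma mnl_key (N : ℕ) (v w : Fin N → ℝ) (hv : ∀ i, 0 < v i) (hw : ∀ i, 0 < w i)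
    (hle : ∀ i, w i ≤ v i) (b : Fin N → ℝ) (hb : ∀ i, b i ∈ Set.Icc (0 : ℝ) 1)
    (S : Finset (Fin N)) :
    ∑ i ∈ S, b i * (v i / (1 + ∑ ℓ ∈ S, v ℓ) - w i / (1 + ∑ ℓ ∈ S, w ℓ))
      ≤ ∑ i ∈ S, Real.log (v i / w i) := by
  set Sv := ∑ ℓ ∈ S, v ℓ with hSv
  set Sw := ∑ ℓ ∈ S, w ℓ with hSw
  have hSv0 : 0 ≤ Sv := Finset.sum_nonneg fun i _ => (hv i).le
  have hSw0 : 0 ≤ Sw := Finset.sum_nonneg fun i _ => (hw i).le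
  have hD : (0:ℝ) < 1 + Sv := by linarith
  have hDw : (0:ℝ) < 1 + Sw := by linarith
  set c : ℝ := (∑ i ∈ S, b i * w i) / (1 + Sw) with hc
  have hc0 : 0 ≤ c := by
    apply div_nonneg _ hDw.le
    exact Finset.sum_nonneg fun i _ => mul_nonneg (hb i).1 (hw i).le
  -- the key identity
  have hid : ∑ i ∈ S, b i * (v i / (1 + Sv) - w i / (1 + Sw))
      = ∑ i ∈ S, (b i - c) * (v i - w i) / (1 + Sv) := by
    have e1 : ∑ i ∈ S, b i * (v i / (1 + Sv) - w i / (1 + Sw))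
        = (∑ i ∈ S, b i * v i) / (1 + Sv) - (∑ i ∈ S, b i * w i) / (1 + Sw) := by
      rw [Finset.sum_div, Finset.sum_div, ← Finset.sum_sub_distrib]
      apply Finset.sum_congr rfl
      intro i _
      ring
    have e2 : ∑ i ∈ S, (b i - c) * (v i - w i) / (1 + Sv)
        = ((∑ i ∈ S, b i * v i) - (∑ i ∈ S, b i * w i) - c * (Sv - Sw)) / (1 + Sv) := by
      rw [← Finset.sum_div]
      congr 1
      simp only [sub_mul, mul_sub, Finset.sum_sub_distrib, ← Finset.mul_sum]
      rw [hSv, hSw]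
      ring
    rw [e1, e2, hc]
    field_simp
    ring
  rw [hid]
  apply Finset.sum_le_sum
  intro i hi
  have hvi : v i ≤ Sv := Finset.single_le_sum (fun j _ => (hv j).le) hi
  have h1 : (b i - c) * (v i - w i) ≤ v i - w i := by
    have := (hb i).2
    nlinarith [hle i]
  calc (b i - c) * (v i - w i) / (1 + Sv) ≤ (v i - w i) / (1 + Sv) :=
        by gcongr
    _ ≤ Real.log (v i / w i) := ratio_log_bound _ _ _ (hw i) (hle i) (by linarith)

/-- Lipschitz continuity of MNL choice probabilities in the log-utilities. -/
theorem mnl_lipschitz (N : ℕ) (v v' : Fin N → ℝ)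
    (hv : ∀ i, 0 < v i) (hv' : ∀ i, 0 < v' i)
    (b : Fin N → ℝ) (hb : ∀ i, b i ∈ Set.Icc (0 : ℝ) 1)
    (S : Finset (Fin N)) :
    ∑ i ∈ S, b i * (v i / (1 + ∑ ℓ ∈ S, v ℓ) - v' i / (1 + ∑ ℓ ∈ S, v' ℓ))
      ≤ ∑ i ∈ S, |Real.log (v i / v' i)| := by
  set m : Fin N → ℝ := fun i => min (v i) (v' i) with hm
  have hmpos : ∀ i, 0 < m i := fun i => lt_min (hv i) (hv' i)
  have hmv : ∀ i, m i ≤ v i := fun i => min_le_left _ _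
  have hmv' : ∀ i, m i ≤ v' i := fun i => min_le_right _ _
  have hb1 : ∀ i, (1 - b i) ∈ Set.Icc (0:ℝ) 1 := by
    intro i
    constructor
    · linarith [(hb i).2]
    · linarith [(hb i).1]
  have key1 := mnl_key N v m hv hmpos hmv b hb S
  have key2 := mnl_key N v' m hv' hmpos hmv' (fun i => 1 - b i) hb1 S
  -- sum of m-probabilities ≤ sum of v'-probabilities
  have hsum : ∑ i ∈ S, (m i / (1 + ∑ ℓ ∈ S, m ℓ) - v' i / (1 + ∑ ℓ ∈ S, v' ℓ)) ≤ 0 := by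
    have hSm0 : 0 ≤ ∑ ℓ ∈ S, m ℓ := Finset.sum_nonneg fun i _ => (hmpos i).le
    have hSv'0 : 0 ≤ ∑ ℓ ∈ S, v' ℓ := Finset.sum_nonneg fun i _ => (hv' i).le
    have hle : ∑ ℓ ∈ S, m ℓ ≤ ∑ ℓ ∈ S, v' ℓ := Finset.sum_le_sum fun i _ => hmv' i
    rw [Finset.sum_sub_distrib, ← Finset.sum_div, ← Finset.sum_div]
    rw [sub_nonpos, div_le_div_iff₀ (by linarith) (by linarith)]
    nlinarith
  -- combine
  have hRHS : ∑ i ∈ S, |Real.log (v i / v' i)|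
      = ∑ i ∈ S, Real.log (v i / m i) + ∑ i ∈ S, Real.log (v' i / m i) := by
    rw [← Finset.sum_add_distrib]
    apply Finset.sum_congr rfl
    intro i _
    rcases le_total (v' i) (v i) with h | h
    · have hmi : m i = v' i := min_eq_right h
      rw [hmi, div_self (hv' i).ne', Real.log_one, add_zero, abs_of_nonneg]
      exact Real.log_nonneg ((one_le_div (hv' i)).2 h)
    · have hmi : m i = v i := min_eq_left h
      rw [hmi, div_self (hv i).ne', Real.log_one, zero_add, abs_of_nonpos, ← Real.log_inv]
      · congr 1; field_simp
      · exact Real.log_nonpos (div_nonneg (hv i).le (hv' i).le) ((div_le_one (hv' i)).2 h)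
  rw [hRHS]
  have hdecomp : ∑ i ∈ S, b i * (v i / (1 + ∑ ℓ ∈ S, v ℓ) - v' i / (1 + ∑ ℓ ∈ S, v' ℓ))
      = (∑ i ∈ S, b i * (v i / (1 + ∑ ℓ ∈ S, v ℓ) - m i / (1 + ∑ ℓ ∈ S, m ℓ)))
      + (∑ i ∈ S, (1 - b i) * (v' i / (1 + ∑ ℓ ∈ S, v' ℓ) - m i / (1 + ∑ ℓ ∈ S, m ℓ)))
      + (∑ i ∈ S, (m i / (1 + ∑ ℓ ∈ S, m ℓ) - v' i / (1 + ∑ ℓ ∈ S, v' ℓ))) := by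
    rw [← Finset.sum_add_distrib, ← Finset.sum_add_distrib]
    apply Finset.sum_congr rfl
    intro i _
    ring
  rw [hdecomp]
  linarith [key1, key2, hsum]
end

section
/- For each period s, the single-sample Hessian h_s(θ) of the MNL negative log-likelihood −log φ(I_s, S_s | e^θ) in θ can be written as h_s(θ) = (1 + Σ_{i∈S_s} e^{θ(i)})^{−2} · [ D + Σ_{i<j, i,j∈S_s} e^{θ(i)+θ(j)} (e_i − e_j)(e_i − e_j)^T ], where D is the diagonal matrix with entries e^{θ(i)}·1{i ∈ S_s}, and consequently h_s(θ) is positive semidefinite. -/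
/-!
Up to a linear function of `θ`, `-log φ(I, S | e^θ)` is `log Z` with
`Z = 1 + ∑_{ℓ ∈ S} e^{θ(ℓ)}`, so its Hessian is that of `log Z`, namely
`Z⁻² (Z · diag w - w wᵀ)` for the weights `w_i = e^{θ(i)} 1{i ∈ S}`. Writing `Z = 1 + ∑ w`,
the bracket is `diag w` plus the weighted Laplacian
`(∑ w) diag w - w wᵀ = ∑_{i<j} w_i w_j (e_i - e_j)(e_i - e_j)ᵀ`, a sum of positive
semidefinite rank-one terms.
-/

/-- MNL choice probability with utilities `exp (θ i)`; `none` is the no-purchase option. -/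
noncomputable def mnlProb {N : ℕ} (θ : Fin N → ℝ) (S : Finset (Fin N)) :
    Option (Fin N) → ℝ
  | none => 1 / (1 + ∑ ℓ ∈ S, Real.exp (θ ℓ))
  | some i => Real.exp (θ i) / (1 + ∑ ℓ ∈ S, Real.exp (θ ℓ))

noncomputable def hessEntry {N : ℕ} (f : (Fin N → ℝ) → ℝ) (θ : Fin N → ℝ)
    (i j : Fin N) : ℝ :=
  fderiv ℝ (fun t => fderiv ℝ f t (Pi.single j 1)) θ (Pi.single i 1)

open Finset Matrix

section PairSum

variable {ι M : Type*} [Fintype ι] [LinearOrder ι] [AddCommMonoid M]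

theorem Finset.sum_univ_prod_eq_two_nsmul_sum_lt (g : ι × ι → M) (hdiag : ∀ a, g (a, a) = 0)
    (hswap : ∀ p, g p.swap = g p) :
    ∑ p, g p = 2 • ∑ p : ι × ι with p.1 < p.2, g p := by
  rw [← sum_filter_add_sum_filter_not univ (fun p : ι × ι => p.1 < p.2), two_nsmul]
  congr 1
  rw [← sum_filter_of_ne (p := fun p : ι × ι => p.2 < p.1), filter_filter]
  · refine sum_nbij' Prod.swap Prod.swap ?_ ?_ (fun _ _ => rfl) (fun _ _ => rfl)
      (fun p _ => (hswap p).symm)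
    · intro p hp
      simp only [mem_filter, mem_univ, true_and, Prod.fst_swap, Prod.snd_swap] at hp ⊢
      exact hp.2
    · intro p hp
      simp only [mem_filter, mem_univ, true_and, Prod.fst_swap, Prod.snd_swap] at hp ⊢
      exact ⟨not_lt.2 hp.le, hp⟩
  · rintro ⟨a, b⟩ hp hne
    simp only [mem_filter, mem_univ, true_and, not_lt] at hp
    rcases hp.lt_or_eq with h | rfl
    · exact h
    · exact absurd (hdiag b) hne

end PairSum

section WeightedLaplacian

variable {ι R : Type*} [Fintype ι] [DecidableEq ι] [CommRing R]

theorem sum_mul_smul_vecMulVec_single_sub_single (w : ι → R) :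
    ∑ p : ι × ι, (w p.1 * w p.2) •
        vecMulVec (Pi.single p.1 1 - Pi.single p.2 1 : ι → R) (Pi.single p.1 1 - Pi.single p.2 1)
      = 2 • ((∑ k, w k) • diagonal w - vecMulVec w w) := by
  ext i j
  simp only [Matrix.sum_apply, Matrix.smul_apply, vecMulVec_apply, Pi.sub_apply, Pi.single_apply,
    diagonal_apply, Fintype.sum_prod_type, smul_eq_mul, Matrix.sub_apply, nsmul_eq_mul]
  simp only [mul_sub, sum_sub_distrib, mul_ite, mul_one, mul_zero, sum_ite_irrel, ← mul_sum,
    sum_const_zero, sum_ite_eq, mem_univ, ↓reduceIte, ← sum_mul, Nat.cast_ofNat]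
  split_ifs with h
  · subst h
    ring
  · ring

theorem sum_lt_mul_smul_vecMulVec_single_sub_single [LinearOrder ι] [IsAddTorsionFree R]
    (w : ι → R) :
    ∑ p : ι × ι with p.1 < p.2, (w p.1 * w p.2) •
        vecMulVec (Pi.single p.1 1 - Pi.single p.2 1 : ι → R) (Pi.single p.1 1 - Pi.single p.2 1)
      = (∑ k, w k) • diagonal w - vecMulVec w w := by
  ext i j
  refine nsmul_right_injective two_ne_zero ?_
  dsimp only
  rw [← Matrix.smul_apply, ← Matrix.smul_apply, ← sum_mul_smul_vecMulVec_single_sub_single,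
    Finset.sum_univ_prod_eq_two_nsmul_sum_lt]
  · exact fun a => by simp
  · rintro ⟨a, b⟩
    simp only [Prod.fst_swap, Prod.snd_swap]
    rw [mul_comm, ← neg_sub, vecMulVec_neg, neg_vecMulVec, neg_neg]

end WeightedLaplacian

variable {N : ℕ}

theorem hessEntry_add_continuousLinearMap {f : (Fin N → ℝ) → ℝ} (hf : Differentiable ℝ f)
    (L : (Fin N → ℝ) →L[ℝ] ℝ) (θ : Fin N → ℝ) (i j : Fin N) :
    hessEntry (fun t => f t + L t) θ i j = hessEntry f θ i j := by
  have hpartial : (fun t => fderiv ℝ (fun t => f t + L t) t (Pi.single j 1))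
      = fun t => fderiv ℝ f t (Pi.single j 1) + L (Pi.single j 1) := by
    funext t
    rw [fderiv_fun_add (hf t) L.differentiableAt, L.fderiv, _root_.add_apply]
  rw [hessEntry, hpartial, fderiv_add_const, hessEntry]

section MNL

variable (S : Finset (Fin N))

noncomputable def mnlWeight (θ : Fin N → ℝ) (i : Fin N) : ℝ :=
  if i ∈ S then Real.exp (θ i) else 0

noncomputable def mnlPartition (θ : Fin N → ℝ) : ℝ := 1 + ∑ ℓ ∈ S, Real.exp (θ ℓ)

theorem mnlPartition_pos (θ : Fin N → ℝ) : 0 < mnlPartition S θ := by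
  unfold mnlPartition; positivity

theorem mnlPartition_eq_one_add_sum_mnlWeight (θ : Fin N → ℝ) :
    mnlPartition S θ = 1 + ∑ i, mnlWeight S θ i := by
  simp only [mnlPartition, mnlWeight, sum_ite_mem, univ_inter]

theorem hasFDerivAt_mnlWeight (θ : Fin N → ℝ) (i : Fin N) :
    HasFDerivAt (fun t => mnlWeight S t i)
      (mnlWeight S θ i • (ContinuousLinearMap.proj i : (Fin N → ℝ) →L[ℝ] ℝ)) θ := by
  by_cases hi : i ∈ S
  · simp only [mnlWeight, if_pos hi]
    exact (Real.hasDerivAt_exp (θ i)).comp_hasFDerivAt θ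
      (ContinuousLinearMap.proj i : (Fin N → ℝ) →L[ℝ] ℝ).hasFDerivAt
  · simp only [mnlWeight, if_neg hi, zero_smul]
    exact hasFDerivAt_const 0 θ

theorem hasFDerivAt_mnlPartition (θ : Fin N → ℝ) :
    HasFDerivAt (mnlPartition S)
      (∑ i, mnlWeight S θ i • (ContinuousLinearMap.proj i : (Fin N → ℝ) →L[ℝ] ℝ))
      θ := by
  simp_rw [funext (mnlPartition_eq_one_add_sum_mnlWeight S)]
  exact (HasFDerivAt.fun_sum fun i _ => hasFDerivAt_mnlWeight S θ i).const_add 1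

theorem fderiv_log_mnlPartition_single (θ : Fin N → ℝ) (j : Fin N) :
    fderiv ℝ (fun t => Real.log (mnlPartition S t)) θ (Pi.single j 1)
      = mnlWeight S θ j * (mnlPartition S θ)⁻¹ := by
  rw [((hasFDerivAt_mnlPartition S θ).log (mnlPartition_pos S θ).ne').fderiv]
  simp [Pi.single_apply, mul_comm]

theorem of_hessEntry_log_mnlPartition (θ : Fin N → ℝ) :
    Matrix.of (hessEntry (fun t => Real.log (mnlPartition S t)) θ)
      = (mnlPartition S θ ^ 2)⁻¹ •
          (mnlPartition S θ • diagonal (mnlWeight S θ)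
            - vecMulVec (mnlWeight S θ) (mnlWeight S θ)) := by
  ext i j
  have hZ := (mnlPartition_pos S θ).ne'
  have hinv : HasFDerivAt (fun t => (mnlPartition S t)⁻¹)
      (-(mnlPartition S θ ^ 2)⁻¹ •
        ∑ k, mnlWeight S θ k • (ContinuousLinearMap.proj k : (Fin N → ℝ) →L[ℝ] ℝ))
      θ :=
    (hasDerivAt_inv hZ).comp_hasFDerivAt θ (hasFDerivAt_mnlPartition S θ)
  have hquot := (hasFDerivAt_mnlWeight S θ j).fun_mul hinv
  rw [Matrix.of_apply, hessEntry, funext (fderiv_log_mnlPartition_single S · j), hquot.fderiv]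
  simp only [_root_.add_apply, _root_.smul_apply, _root_.sum_apply, ContinuousLinearMap.proj_apply,
    Pi.single_apply, smul_eq_mul, mul_ite, mul_one, mul_zero, sum_ite_eq', mem_univ, ↓reduceIte,
    neg_mul, mul_neg, Matrix.smul_apply, Matrix.sub_apply, diagonal_apply, vecMulVec_apply]
  rcases eq_or_ne i j with rfl | hij
  · simp only [if_true]
    field_simp
    ring
  · simp only [if_neg hij, if_neg hij.symm]
    ring

theorem mnlPartition_smul_diagonal_sub_vecMulVec (θ : Fin N → ℝ) :
    mnlPartition S θ • diagonal (mnlWeight S θ) - vecMulVec (mnlWeight S θ) (mnlWeight S θ)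
      = diagonal (fun i => Real.exp (θ i) * (if i ∈ S then 1 else 0))
        + ∑ p : Fin N × Fin N with p.1 < p.2 ∧ p.1 ∈ S ∧ p.2 ∈ S,
            Real.exp (θ p.1 + θ p.2) •
              vecMulVec (Pi.single p.1 1 - Pi.single p.2 1 : Fin N → ℝ)
                (Pi.single p.1 1 - Pi.single p.2 1) := by
  have hdiag : (fun i => Real.exp (θ i) * (if i ∈ S then 1 else 0)) = mnlWeight S θ := by
    funext i
    simp only [mnlWeight, mul_ite, mul_one, mul_zero]
  have hpairs : ∑ p : Fin N × Fin N with p.1 < p.2 ∧ p.1 ∈ S ∧ p.2 ∈ S,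
        Real.exp (θ p.1 + θ p.2) • vecMulVec
          (Pi.single p.1 1 - Pi.single p.2 1 : Fin N → ℝ) (Pi.single p.1 1 - Pi.single p.2 1)
      = ∑ p : Fin N × Fin N with p.1 < p.2, (mnlWeight S θ p.1 * mnlWeight S θ p.2) •
          vecMulVec (Pi.single p.1 1 - Pi.single p.2 1 : Fin N → ℝ)
            (Pi.single p.1 1 - Pi.single p.2 1) := by
    rw [← filter_filter]
    refine (sum_congr rfl fun p hp => ?_).trans (sum_filter_of_ne fun p _ hne => ?_)
    · obtain ⟨h1, h2⟩ := (mem_filter.1 hp).2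
      rw [mnlWeight, mnlWeight, if_pos h1, if_pos h2, Real.exp_add]
    · by_contra hS
      refine hne ?_
      rcases not_and_or.1 hS with h | h <;> simp [mnlWeight, h]
  rw [mnlPartition_eq_one_add_sum_mnlWeight, add_smul, one_smul, add_sub_assoc, hdiag, hpairs,
    sum_lt_mul_smul_vecMulVec_single_sub_single]

theorem exists_neg_log_mnlProb_eq_log_mnlPartition_add (I : Option (Fin N)) :
    ∃ L : (Fin N → ℝ) →L[ℝ] ℝ,
      ∀ θ, -Real.log (mnlProb θ S I) = Real.log (mnlPartition S θ) + L θ := by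
  cases I with
  | none =>
    refine ⟨0, fun θ => ?_⟩
    simp [mnlProb, mnlPartition, Real.log_inv]
  | some i =>
    refine ⟨-ContinuousLinearMap.proj i, fun θ => ?_⟩
    change -Real.log (Real.exp (θ i) / mnlPartition S θ) = _
    rw [Real.log_div (Real.exp_ne_zero _) (mnlPartition_pos S θ).ne', Real.log_exp]
    simp [mnlPartition, sub_eq_add_neg]

end MNL

theorem mnl_single_sample_hessian_general (N : ℕ) (S : Finset (Fin N)) (I : Option (Fin N))
    (θ : Fin N → ℝ) :
    (Matrix.of fun i j : Fin N =>
        hessEntry (fun θ' => -Real.log (mnlProb θ' S I)) θ i j)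
      = (1 + ∑ ℓ ∈ S, Real.exp (θ ℓ)) ^ (-2 : ℤ) •
        (Matrix.diagonal (fun i : Fin N => Real.exp (θ i) * (if i ∈ S then 1 else 0))
          + ∑ p ∈ Finset.univ.filter
              (fun p : Fin N × Fin N => p.1 < p.2 ∧ p.1 ∈ S ∧ p.2 ∈ S),
            Real.exp (θ p.1 + θ p.2) •
              Matrix.vecMulVec
                ((Pi.single p.1 1 - Pi.single p.2 1 : Fin N → ℝ))
                ((Pi.single p.1 1 - Pi.single p.2 1 : Fin N → ℝ)))
    ∧ (Matrix.of fun i j : Fin N =>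
        hessEntry (fun θ' => -Real.log (mnlProb θ' S I)) θ i j).PosSemidef := by
  obtain ⟨L, hL⟩ := exists_neg_log_mnlProb_eq_log_mnlPartition_add S I
  have hdiff : Differentiable ℝ fun t => Real.log (mnlPartition S t) := fun t =>
    ((hasFDerivAt_mnlPartition S t).log (mnlPartition_pos S t).ne').differentiableAt
  have hhess : (Matrix.of fun i j => hessEntry (fun θ' => -Real.log (mnlProb θ' S I)) θ i j)
      = Matrix.of (hessEntry (fun t => Real.log (mnlPartition S t)) θ) := by
    simp_rw [hL, hessEntry_add_continuousLinearMap hdiff]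
  rw [hhess, of_hessEntry_log_mnlPartition, mnlPartition_smul_diagonal_sub_vecMulVec]
  refine ⟨by rw [_root_.zpow_neg]; rfl, ?_⟩
  refine .smul (.add (.diagonal fun i => ?_)
    (posSemidef_sum _ fun p _ => .smul ?_ (Real.exp_pos _).le)) ?_
  · exact mul_nonneg (Real.exp_pos _).le (by split_ifs <;> norm_num)
  · exact posSemidef_vecMulVec_self_star _ -- `star` is definitionally `id` on real vectors
  · positivity

/-- Single-sample Hessian of the MNL negative log-likelihood: explicit rank-one
decomposition and positive semidefiniteness. -/
theorem mnl_single_sample_hessian (N : ℕ) (S : Finset (Fin N)) (I : Option (Fin N))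
    (hI : ∀ i : Fin N, I = some i → i ∈ S) (θ : Fin N → ℝ) :
    (Matrix.of fun i j : Fin N =>
        hessEntry (fun θ' => -Real.log (mnlProb θ' S I)) θ i j)
      = (1 + ∑ ℓ ∈ S, Real.exp (θ ℓ)) ^ (-2 : ℤ) •
        (Matrix.diagonal (fun i : Fin N => Real.exp (θ i) * (if i ∈ S then 1 else 0))
          + ∑ p ∈ Finset.univ.filter
              (fun p : Fin N × Fin N => p.1 < p.2 ∧ p.1 ∈ S ∧ p.2 ∈ S),
            Real.exp (θ p.1 + θ p.2) •
              Matrix.vecMulVec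
                ((Pi.single p.1 1 - Pi.single p.2 1 : Fin N → ℝ))
                ((Pi.single p.1 1 - Pi.single p.2 1 : Fin N → ℝ)))
    ∧ (Matrix.of fun i j : Fin N =>
        hessEntry (fun θ' => -Real.log (mnlProb θ' S I)) θ i j).PosSemidef :=
  mnl_single_sample_hessian_general N S I θ
end

section
/- Assume |S_s| ≤ B for all s and θ ∈ [−log R, log R]^N with R ≥ 1. Then the Hessian H_t(θ) = Σ_{s=1}^t h_s(θ) of the MNL negative log-likelihood satisfies H_t(θ) ⪰ (1/(R(1+B·R)²)) · diag(n_t(1),…,n_t(N)), where n_t(i) = Σ_{s=1}^t 1{i ∈ S_s}. -/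
/-! Writing `Z = 1 + ∑_{ℓ ∈ S} exp θ_ℓ` and `p_i = exp θ_i / Z` on `S` (zero elsewhere),
`-log φ(I, S)` is `log Z` minus a linear function of `θ`, so every round has Hessian
`diag p - p pᵀ`. Since `∑ p = 1 - 1/Z`, Cauchy–Schwarz gives `diag p - p pᵀ ⪰ Z⁻¹ diag p`, and
on the box `Z⁻¹ p_i ≥ 1 / (R (1 + B R)²)` for `i ∈ S`. Summing over the rounds gives the bound. -/

open Matrix Real
open scoped MatrixOrder

namespace Matrix

variable {n : Type*} [Fintype n] [DecidableEq n]

theorem posSemidef_smul_diagonal_sub_vecMulVec {p : n → ℝ} {b : ℝ} (hp : 0 ≤ p)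
    (hb : ∑ i, p i ≤ b) : (b • diagonal p - vecMulVec p p).PosSemidef := by
  refine .of_dotProduct_mulVec_nonneg ?_ fun x => ?_
  · refine IsHermitian.ext fun i j => ?_
    rcases eq_or_ne i j with rfl | hij
    · simp
    · simp [hij, hij.symm, vecMulVec_apply, mul_comm]
  have hquad : star x ⬝ᵥ ((b • diagonal p - vecMulVec p p) *ᵥ x)
      = b * ∑ i, p i * x i ^ 2 - (∑ i, p i * x i) ^ 2 := by
    simp only [star_trivial, sub_mulVec, smul_mulVec, mulVec_diagonal, vecMulVec_mulVec,
      dotProduct, Pi.sub_apply, Pi.smul_apply, smul_eq_mul, MulOpposite.smul_eq_mul_unop,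
      MulOpposite.unop_op, mul_sub, Finset.sum_sub_distrib, Finset.mul_sum, Finset.sum_mul, sq]
    congr 1 <;> refine Finset.sum_congr rfl fun i _ => ?_
    · ring
    · exact Finset.sum_congr rfl fun j _ => by ring
  have hcs : (∑ i, p i * x i) ^ 2 ≤ (∑ i, p i) * ∑ i, p i * x i ^ 2 :=
    Finset.sum_sq_le_sum_mul_sum_of_sq_le_mul _ (fun i _ => hp i)
      (fun i _ => mul_nonneg (hp i) (sq_nonneg _)) fun i _ => (by ring : _ = _).le
  have hsq : 0 ≤ ∑ i, p i * x i ^ 2 := Finset.sum_nonneg fun i _ => mul_nonneg (hp i) (sq_nonneg _)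
  rw [hquad]
  nlinarith

theorem diagonal_le_diagonal_sub_vecMulVec {p d : n → ℝ} {q : ℝ} (hp : 0 ≤ p)
    (hsum : ∑ i, p i ≤ 1 - q) (hd : ∀ i, d i ≤ q * p i) :
    diagonal d ≤ diagonal p - vecMulVec p p := by
  calc diagonal d ≤ diagonal (q • p) := by
        rw [le_iff, diagonal_sub, posSemidef_diagonal_iff]
        exact fun i => by simpa using hd i
    _ ≤ diagonal p - vecMulVec p p := by
        rw [le_iff, diagonal_smul, sub_right_comm]
        simpa only [sub_smul, one_smul] using posSemidef_smul_diagonal_sub_vecMulVec hp hsum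

end Matrix

theorem hessEntry_sub_clm {N : ℕ} {f : (Fin N → ℝ) → ℝ} (hf : Differentiable ℝ f)
    (L : (Fin N → ℝ) →L[ℝ] ℝ) (θ : Fin N → ℝ) (i j : Fin N) :
    hessEntry (fun y => f y - L y) θ i j = hessEntry f θ i j := by
  have hgrad : (fun t => fderiv ℝ (fun y => f y - L y) t (Pi.single j 1))
      = fun t => fderiv ℝ f t (Pi.single j 1) - L (Pi.single j 1) := funext fun t => by
    rw [fderiv_fun_sub (hf t) L.differentiableAt, L.fderiv]
    rfl
  rw [hessEntry, hgrad, fderiv_sub_const, hessEntry]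

namespace MNL

variable {N : ℕ} (S : Finset (Fin N))

noncomputable def partition (θ : Fin N → ℝ) : ℝ := 1 + ∑ ℓ ∈ S, exp (θ ℓ)

noncomputable def choiceProbs (θ : Fin N → ℝ) (i : Fin N) : ℝ :=
  if i ∈ S then exp (θ i) / partition S θ else 0

variable {S}

theorem one_le_partition (θ : Fin N → ℝ) : 1 ≤ partition S θ :=
  le_add_of_nonneg_right (Finset.sum_nonneg fun _ _ => (exp_pos _).le)

theorem partition_pos (θ : Fin N → ℝ) : 0 < partition S θ :=
  one_pos.trans_le (one_le_partition θ)

theorem partition_le {θ : Fin N → ℝ} {M : ℝ} (h : ∀ ℓ ∈ S, exp (θ ℓ) ≤ M) :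
    partition S θ ≤ 1 + S.card * M := by
  simpa [partition] using Finset.sum_le_card_nsmul S _ M h

theorem choiceProbs_nonneg (θ : Fin N → ℝ) : 0 ≤ choiceProbs S θ := fun i => by
  unfold choiceProbs
  split_ifs
  exacts [div_nonneg (exp_pos _).le (partition_pos θ).le, le_rfl]

theorem sum_choiceProbs (θ : Fin N → ℝ) :
    ∑ i, choiceProbs S θ i = 1 - (partition S θ)⁻¹ := by
  have hZ := (partition_pos (S := S) θ).ne'
  simp only [choiceProbs, Finset.sum_ite_mem, Finset.univ_inter, ← Finset.sum_div]
  field_simp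
  simp [partition]

variable (S) in
noncomputable def gradLogPartition (θ : Fin N → ℝ) : (Fin N → ℝ) →L[ℝ] ℝ :=
  ∑ ℓ, choiceProbs S θ ℓ • ContinuousLinearMap.proj ℓ

theorem gradLogPartition_single (θ : Fin N → ℝ) (i : Fin N) :
    gradLogPartition S θ (Pi.single i 1) = choiceProbs S θ i := by
  simp [gradLogPartition, Pi.single_apply]

theorem hasFDerivAt_log_partition (θ : Fin N → ℝ) :
    HasFDerivAt (fun y => log (partition S y)) (gradLogPartition S θ) θ := by
  have hZ : HasFDerivAt (partition S) (∑ ℓ ∈ S, exp (θ ℓ) • ContinuousLinearMap.proj ℓ) θ :=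
    (HasFDerivAt.fun_sum fun ℓ _ => (hasFDerivAt_apply ℓ θ).exp).const_add 1
  refine (hZ.log (partition_pos θ).ne').congr_fderiv (ContinuousLinearMap.ext fun v => ?_)
  simp [gradLogPartition, choiceProbs, Finset.sum_ite_mem, Finset.mul_sum,
    div_eq_inv_mul, mul_assoc]

theorem hasFDerivAt_choiceProbs {j : Fin N} (hj : j ∈ S) (θ : Fin N → ℝ) :
    HasFDerivAt (fun t => choiceProbs S t j)
      (choiceProbs S θ j • (ContinuousLinearMap.proj j - gradLogPartition S θ)) θ := by
  have hexp : (fun t => choiceProbs S t j) = fun t => exp (t j - log (partition S t)) :=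
    funext fun t => by rw [choiceProbs, if_pos hj, exp_sub, exp_log (partition_pos t)]
  rw [hexp, congrFun hexp θ]
  exact ((hasFDerivAt_apply j θ).fun_sub (hasFDerivAt_log_partition θ)).exp

theorem fderiv_choiceProbs_single (θ : Fin N → ℝ) (i j : Fin N) :
    fderiv ℝ (fun t => choiceProbs S t j) θ (Pi.single i 1)
      = (diagonal (choiceProbs S θ) - vecMulVec (choiceProbs S θ) (choiceProbs S θ)) i j := by
  by_cases hj : j ∈ S
  · rw [(hasFDerivAt_choiceProbs hj θ).fderiv]
    rcases eq_or_ne i j with rfl | hij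
    · simp [gradLogPartition_single, vecMulVec_apply, mul_sub]
    · simp [gradLogPartition_single, vecMulVec_apply, hij, Ne.symm hij, mul_comm]
  · have hzero : (fun t => choiceProbs S t j) = fun _ => 0 :=
      funext fun t => if_neg hj
    have hj0 : choiceProbs S θ j = 0 := if_neg hj
    rw [hzero, fderiv_fun_const]
    rcases eq_or_ne i j with rfl | hij
    · simp [vecMulVec_apply, hj0]
    · simp [vecMulVec_apply, hij, hj0]

theorem hessEntry_log_partition (θ : Fin N → ℝ) (i j : Fin N) :
    hessEntry (fun y => log (partition S y)) θ i j
      = (diagonal (choiceProbs S θ) - vecMulVec (choiceProbs S θ) (choiceProbs S θ)) i j := by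
  have hgrad : (fun t => fderiv ℝ (fun y => log (partition S y)) t (Pi.single j 1))
      = fun t => choiceProbs S t j := funext fun t => by
    rw [(hasFDerivAt_log_partition t).fderiv, gradLogPartition_single]
  rw [hessEntry, hgrad, fderiv_choiceProbs_single]

theorem exists_neg_log_mnlProb_eq (o : Option (Fin N)) :
    ∃ L : (Fin N → ℝ) →L[ℝ] ℝ, ∀ θ, -log (mnlProb θ S o) = log (partition S θ) - L θ := by
  cases o with
  | none => exact ⟨0, fun θ => by simp [mnlProb, partition]⟩
  | some i =>
    refine ⟨.proj i, fun θ => ?_⟩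
    change -log (exp (θ i) / partition S θ) = _
    rw [log_div (exp_ne_zero _) (partition_pos θ).ne', log_exp]
    simp

theorem hessian_neg_log_mnlProb (o : Option (Fin N)) (θ : Fin N → ℝ) :
    (of fun i j => hessEntry (fun θ' => -log (mnlProb θ' S o)) θ i j)
      = diagonal (choiceProbs S θ) - vecMulVec (choiceProbs S θ) (choiceProbs S θ) := by
  obtain ⟨L, hL⟩ := exists_neg_log_mnlProb_eq (S := S) o
  have hdiff : Differentiable ℝ fun y => log (partition S y) :=
    fun y => (hasFDerivAt_log_partition y).differentiableAt
  ext i j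
  rw [of_apply, funext hL, hessEntry_sub_clm hdiff, hessEntry_log_partition]

theorem le_inv_partition_mul_choiceProbs {θ : Fin N → ℝ} {B : ℕ} {R : ℝ} (hS : S.card ≤ B)
    (hR : 1 ≤ R) (hθ : ∀ i, θ i ∈ Set.Icc (-log R) (log R)) {i : Fin N} (hi : i ∈ S) :
    1 / (R * (1 + B * R) ^ 2) ≤ (partition S θ)⁻¹ * choiceProbs S θ i := by
  have hR0 : 0 < R := one_pos.trans_le hR
  have hexp_le ℓ : exp (θ ℓ) ≤ R := by
    simpa [exp_log hR0] using exp_le_exp.2 (hθ ℓ).2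
  have hexp_ge : R⁻¹ ≤ exp (θ i) := by
    simpa [exp_neg, exp_log hR0] using exp_le_exp.2 (hθ i).1
  have hZ : partition S θ ≤ 1 + B * R :=
    (partition_le fun ℓ _ => hexp_le ℓ).trans (by gcongr)
  have hZ0 := partition_pos (S := S) θ
  calc 1 / (R * (1 + B * R) ^ 2) ≤ R⁻¹ / partition S θ ^ 2 := by
        rw [← one_div, div_div]
        gcongr
    _ ≤ exp (θ i) / partition S θ ^ 2 := by gcongr
    _ = (partition S θ)⁻¹ * choiceProbs S θ i := by
        rw [choiceProbs, if_pos hi]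
        field_simp

theorem diagonal_le_hessian_neg_log_mnlProb {θ : Fin N → ℝ} {B : ℕ} {R : ℝ}
    (hS : S.card ≤ B) (hR : 1 ≤ R) (hθ : ∀ i, θ i ∈ Set.Icc (-log R) (log R))
    (o : Option (Fin N)) :
    diagonal (fun i => if i ∈ S then 1 / (R * (1 + B * R) ^ 2) else 0)
      ≤ of fun i j => hessEntry (fun θ' => -log (mnlProb θ' S o)) θ i j := by
  rw [hessian_neg_log_mnlProb]
  refine diagonal_le_diagonal_sub_vecMulVec (choiceProbs_nonneg θ) (sum_choiceProbs θ).le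
    fun i => ?_
  split_ifs with hi
  · exact le_inv_partition_mul_choiceProbs hS hR hθ hi
  · exact mul_nonneg (inv_nonneg.2 (partition_pos θ).le) (choiceProbs_nonneg θ i)

end MNL

theorem mnl_hessian_lower_bound_general (N t B : ℕ)
    (S : Fin t → Finset (Fin N)) (I : Fin t → Option (Fin N))
    (hB : ∀ s, (S s).card ≤ B)
    (R : ℝ) (hR : 1 ≤ R) (θ : Fin N → ℝ)
    (hθ : ∀ i, θ i ∈ Set.Icc (-Real.log R) (Real.log R)) :
    ((∑ s : Fin t, Matrix.of fun i j : Fin N =>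
          hessEntry (fun θ' => -Real.log (mnlProb θ' (S s) (I s))) θ i j)
      - (1 / (R * (1 + B * R) ^ 2)) •
          Matrix.diagonal (fun i : Fin N =>
            ((Finset.univ.filter (fun s : Fin t => i ∈ S s)).card : ℝ))).PosSemidef := by
  have hcount : (1 / (R * (1 + B * R) ^ 2)) •
        diagonal (fun i : Fin N => ((Finset.univ.filter (fun s : Fin t => i ∈ S s)).card : ℝ))
      = ∑ s, diagonal (fun i => if i ∈ S s then 1 / (R * (1 + B * R) ^ 2) else 0) := by
    ext i j
    rcases eq_or_ne i j with rfl | hij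
    · simp [Matrix.sum_apply, Finset.sum_ite, mul_comm]
    · simp [Matrix.sum_apply, hij]
  rw [← le_iff, hcount]
  exact Finset.sum_le_sum fun s _ =>
    MNL.diagonal_le_hessian_neg_log_mnlProb (hB s) hR hθ (I s)

/-- The Hessian of the MNL negative log-likelihood dominates a scaled diagonal
matrix of offer counts. -/
theorem mnl_hessian_lower_bound (N t B : ℕ)
    (S : Fin t → Finset (Fin N)) (I : Fin t → Option (Fin N))
    (hI : ∀ s, ∀ i : Fin N, I s = some i → i ∈ S s)
    (hB : ∀ s, (S s).card ≤ B)
    (R : ℝ) (hR : 1 ≤ R) (θ : Fin N → ℝ)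
    (hθ : ∀ i, θ i ∈ Set.Icc (-Real.log R) (Real.log R)) :
    ((∑ s : Fin t, Matrix.of fun i j : Fin N =>
          hessEntry (fun θ' => -Real.log (mnlProb θ' (S s) (I s))) θ i j)
      - (1 / (R * (1 + B * R) ^ 2)) •
          Matrix.diagonal (fun i : Fin N =>
            ((Finset.univ.filter (fun s : Fin t => i ∈ S s)).card : ℝ))).PosSemidef :=
  mnl_hessian_lower_bound_general N t B S I hB R hR θ hθ
end

section
/- Let LP(v) be the linear program maximizing Σ_S R(S|v)y(S) subject to Σ_S A(S,k|v)y(S) ≤ c(k) for all k ∈ {1,…,K}, Σ_S y(S) = 1, y ≥ 0. Suppose |R(S|v̂) − R(S|v*)| ≤ Δ and |A(S,k|v̂) − A(S,k|v*)| ≤ Δ for all S ∈ 𝒮 and k, with R(∅|·)=0, A(∅,k|·)=0, and Δ ≤ min_k c(k). Then Opt(LP(v̂)) ≥ (1 − Δ/min_k c(k))·Opt(LP(v*)) − Δ. -/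
/-- Optimal value of the assortment LP with revenues `R`, consumptions `A`, capacities `c`. -/
noncomputable def lpOpt (n K : ℕ) (𝒮 : Finset (Finset (Fin n)))
    (R : Finset (Fin n) → ℝ) (A : Finset (Fin n) → Fin K → ℝ) (c : Fin K → ℝ) : ℝ :=
  sSup {r : ℝ | ∃ y : Finset (Fin n) → ℝ,
    (∀ S ∈ 𝒮, 0 ≤ y S) ∧ (∑ S ∈ 𝒮, y S = 1) ∧
    (∀ k, ∑ S ∈ 𝒮, A S k * y S ≤ c k) ∧ r = ∑ S ∈ 𝒮, R S * y S}

/-- Perturbation bound for the LP optimal value under Δ-close coefficients. -/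
theorem lp_opt_perturbation (n K : ℕ) (hK : 0 < K)
    (𝒮 : Finset (Finset (Fin n))) (hemp : ∅ ∈ 𝒮)
    (Rhat Rstar : Finset (Fin n) → ℝ)
    (Ahat Astar : Finset (Fin n) → Fin K → ℝ) (c : Fin K → ℝ)
    (hRhat : ∀ S, Rhat S ∈ Set.Icc (0 : ℝ) 1) (hRstar : ∀ S, Rstar S ∈ Set.Icc (0 : ℝ) 1)
    (hAhat : ∀ S k, Ahat S k ∈ Set.Icc (0 : ℝ) 1)
    (hAstar : ∀ S k, Astar S k ∈ Set.Icc (0 : ℝ) 1)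
    (hc : ∀ k, 0 < c k)
    (hRemp : Rhat ∅ = 0 ∧ Rstar ∅ = 0)
    (hAemp : ∀ k, Ahat ∅ k = 0 ∧ Astar ∅ k = 0)
    (Δ : ℝ) (hΔ0 : 0 ≤ Δ)
    (hRclose : ∀ S ∈ 𝒮, |Rhat S - Rstar S| ≤ Δ)
    (hAclose : ∀ S ∈ 𝒮, ∀ k, |Ahat S k - Astar S k| ≤ Δ)
    (hΔ : Δ ≤ ⨅ k, c k) :
    lpOpt n K 𝒮 Rhat Ahat c ≥
      (1 - Δ / (⨅ k, c k)) * lpOpt n K 𝒮 Rstar Astar c - Δ := by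
  haveI : Nonempty (Fin K) := ⟨⟨0, hK⟩⟩
  set m := ⨅ k, c k with hm_def
  have hmk : ∀ k, m ≤ c k := fun k =>
    ciInf_le (Set.Finite.bddBelow (Set.finite_range c)) k
  obtain ⟨k0, hk0⟩ := Finite.exists_min c
  have hm0 : (0:ℝ) < m := lt_of_lt_of_le (hc k0) (le_ciInf hk0)
  set θ := Δ / m with hθ_def
  have hθ0 : 0 ≤ θ := div_nonneg hΔ0 hm0.le
  have hθ1 : θ ≤ 1 := (div_le_one hm0).mpr hΔ
  have hθm : θ * m = Δ := div_mul_cancel₀ Δ hm0.ne'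
  set Shat := {r : ℝ | ∃ y : Finset (Fin n) → ℝ,
    (∀ S ∈ 𝒮, 0 ≤ y S) ∧ (∑ S ∈ 𝒮, y S = 1) ∧
    (∀ k, ∑ S ∈ 𝒮, Ahat S k * y S ≤ c k) ∧ r = ∑ S ∈ 𝒮, Rhat S * y S} with hShat_def
  set Sstar := {r : ℝ | ∃ y : Finset (Fin n) → ℝ,
    (∀ S ∈ 𝒮, 0 ≤ y S) ∧ (∑ S ∈ 𝒮, y S = 1) ∧
    (∀ k, ∑ S ∈ 𝒮, Astar S k * y S ≤ c k) ∧ r = ∑ S ∈ 𝒮, Rstar S * y S} with hSstar_def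
  have hlp1 : lpOpt n K 𝒮 Rhat Ahat c = sSup Shat := rfl
  have hlp2 : lpOpt n K 𝒮 Rstar Astar c = sSup Sstar := rfl
  -- Shat is bounded above by 1
  have hbdd : ∀ r ∈ Shat, r ≤ 1 := by
    rintro r ⟨y, hy0, hy1, _, rfl⟩
    calc ∑ S ∈ 𝒮, Rhat S * y S ≤ ∑ S ∈ 𝒮, 1 * y S := by
          apply Finset.sum_le_sum
          intro S hS
          exact mul_le_mul_of_nonneg_right (hRhat S).2 (hy0 S hS)
      _ = 1 := by simpa using hy1
  have hbddA : BddAbove Shat := ⟨1, fun r hr => hbdd r hr⟩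
  -- 0 ∈ Shat via the empty assortment
  have h0mem : (0:ℝ) ∈ Shat := by
    refine ⟨fun S => if S = ∅ then 1 else 0, ?_, ?_, ?_, ?_⟩
    · intro S _; dsimp only; split <;> norm_num
    · rw [Finset.sum_ite_eq' 𝒮 ∅ (fun _ => (1:ℝ))]; simp [hemp]
    · intro k
      have : ∑ S ∈ 𝒮, Ahat S k * (if S = ∅ then 1 else 0)
          = ∑ S ∈ 𝒮, (if S = ∅ then Ahat S k else 0) := by
        apply Finset.sum_congr rfl; intro S _; split <;> simp
      rw [this, Finset.sum_ite_eq' 𝒮 ∅ (fun S => Ahat S k)]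
      simp [hemp, (hAemp k).1, (hc k).le]
    · have : ∑ S ∈ 𝒮, Rhat S * (if S = ∅ then 1 else 0)
          = ∑ S ∈ 𝒮, (if S = ∅ then Rhat S else 0) := by
        apply Finset.sum_congr rfl; intro S _; split <;> simp
      rw [this, Finset.sum_ite_eq' 𝒮 ∅ Rhat]
      simp [hemp, hRemp.1]
  have hsup0 : 0 ≤ sSup Shat := le_csSup hbddA h0mem
  -- main perturbation step
  have hmain : ∀ r ∈ Sstar, (1 - θ) * r - Δ ≤ sSup Shat := by
    rintro r ⟨y, hy0, hy1, hyc, rfl⟩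
    set yh : Finset (Fin n) → ℝ :=
      fun S => (1 - θ) * y S + (if S = ∅ then θ else 0) with hyh_def
    have hsplit : ∀ f : Finset (Fin n) → ℝ,
        ∑ S ∈ 𝒮, f S * yh S = (1 - θ) * (∑ S ∈ 𝒮, f S * y S) + f ∅ * θ := by
      intro f
      have : ∀ S ∈ 𝒮, f S * yh S
          = (1 - θ) * (f S * y S) + (if S = ∅ then f S * θ else 0) := by
        intro S _
        simp only [hyh_def]
        split <;> ring
      rw [Finset.sum_congr rfl this, Finset.sum_add_distrib, ← Finset.mul_sum,
        Finset.sum_ite_eq' 𝒮 ∅ (fun S => f S * θ)]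
      simp [hemp]
    have hmem : (∑ S ∈ 𝒮, Rhat S * yh S) ∈ Shat := by
      refine ⟨yh, ?_, ?_, ?_, rfl⟩
      · intro S hS
        have h1 : 0 ≤ (1 - θ) * y S :=
          mul_nonneg (by linarith) (hy0 S hS)
        have h2 : (0:ℝ) ≤ (if S = ∅ then θ else 0) := by split <;> simp [hθ0]
        show 0 ≤ (1 - θ) * y S + (if S = ∅ then θ else 0)
        linarith
      · have : ∀ S ∈ 𝒮, yh S = (1 - θ) * y S + (if S = ∅ then θ else 0) := fun S _ => rfl
        rw [Finset.sum_congr rfl this, Finset.sum_add_distrib, ← Finset.mul_sum, hy1,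
          Finset.sum_ite_eq' 𝒮 ∅ (fun _ => θ)]
        simp [hemp]
      · intro k
        rw [hsplit (fun S => Ahat S k), (hAemp k).1]
        have hT : ∑ S ∈ 𝒮, Ahat S k * y S ≤ c k + Δ := by
          calc ∑ S ∈ 𝒮, Ahat S k * y S ≤ ∑ S ∈ 𝒮, (Astar S k + Δ) * y S := by
                apply Finset.sum_le_sum
                intro S hS
                have := abs_le.mp (hAclose S hS k)
                exact mul_le_mul_of_nonneg_right (by linarith [this.2]) (hy0 S hS)
            _ = (∑ S ∈ 𝒮, Astar S k * y S) + Δ * (∑ S ∈ 𝒮, y S) := by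
                rw [Finset.mul_sum, ← Finset.sum_add_distrib]
                apply Finset.sum_congr rfl; intro S _; ring
            _ ≤ c k + Δ := by rw [hy1]; linarith [hyc k]
        have hθc : Δ ≤ θ * (c k + Δ) := by
          have h1 : θ * m ≤ θ * (c k + Δ) :=
            mul_le_mul_of_nonneg_left (by linarith [hmk k]) hθ0
          linarith [hθm]
        have h1θ : 0 ≤ 1 - θ := by linarith
        have := mul_le_mul_of_nonneg_left hT h1θ
        nlinarith
    have hRlow : (∑ S ∈ 𝒮, Rstar S * y S) - Δ ≤ ∑ S ∈ 𝒮, Rhat S * y S := by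
      have : ∑ S ∈ 𝒮, (Rstar S - Δ) * y S ≤ ∑ S ∈ 𝒮, Rhat S * y S := by
        apply Finset.sum_le_sum
        intro S hS
        have := abs_le.mp (hRclose S hS)
        exact mul_le_mul_of_nonneg_right (by linarith [this.1]) (hy0 S hS)
      calc (∑ S ∈ 𝒮, Rstar S * y S) - Δ
          = (∑ S ∈ 𝒮, Rstar S * y S) - Δ * (∑ S ∈ 𝒮, y S) := by rw [hy1]; ring
        _ = ∑ S ∈ 𝒮, (Rstar S - Δ) * y S := by
            rw [Finset.mul_sum, ← Finset.sum_sub_distrib]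
            apply Finset.sum_congr rfl; intro S _; ring
        _ ≤ _ := this
    have hval : (1 - θ) * (∑ S ∈ 𝒮, Rstar S * y S) - Δ ≤ ∑ S ∈ 𝒮, Rhat S * yh S := by
      rw [hsplit Rhat, hRemp.1]
      have h1θ : 0 ≤ 1 - θ := by linarith
      have := mul_le_mul_of_nonneg_left hRlow h1θ
      nlinarith
    exact hval.trans (le_csSup hbddA hmem)
  rw [ge_iff_le, hlp1, hlp2]
  rcases eq_or_lt_of_le hθ1 with hθe | hθlt
  · rw [← hθe]
    simp only [sub_self, zero_mul]
    linarith
  · have h1θ : 0 < 1 - θ := by linarith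
    have hstar_le : sSup Sstar ≤ (sSup Shat + Δ) / (1 - θ) := by
      apply Real.sSup_le
      · intro r hr
        rw [le_div_iff₀ h1θ]
        have := hmain r hr
        nlinarith
      · positivity
    have := mul_le_mul_of_nonneg_left hstar_le h1θ.le
    rw [mul_div_cancel₀ _ h1θ.ne'] at this
    linarith
end
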